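/- Let π be the group with presentation ⟨a, b, t | t·a·t⁻¹ = a², a·b·a⁻¹ = b⁻¹, b³ = 1⟩. Then π is not virtually torsion-free: every subgroup of π of finite index contains a non-identity element of finite order. -/

import Mathlib

/-- The relators of the group `π = ⟨a, b, t | tat⁻¹ = a², aba⁻¹ = b⁻¹, b³ = 1⟩`, with the
three generators `a, b, t` encoded as `0, 1, 2 : Fin 3`: the words `t·a·t⁻¹·a⁻²`, `a·b·a⁻¹·b`
and `b³`. -/
def satelliteRels : Set (FreeGroup (Fin 3)) :=
  {FreeGroup.of 2 * FreeGroup.of 0 * (FreeGroup.of 2)⁻¹ * (FreeGroup.of 0 ^ 2)⁻¹,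
   FreeGroup.of 0 * FreeGroup.of 1 * (FreeGroup.of 0)⁻¹ * FreeGroup.of 1,
   FreeGroup.of 1 ^ 3}

/-! If the image of `a` in a quotient has finite order `n`, then `n` is odd because `a` is
conjugate to `a²`; so `a` is a power of `a²`, which commutes with `b` since `a` inverts `b`.
Hence `b = b⁻¹`, and together with `b³ = 1` this forces `b = 1`. Thus `b` lies in the normal
core of every finite-index subgroup, while it is nontrivial in `π`. -/

section Relations

variable {G : Type*} [Group G] {a b t : G}

theorem odd_orderOf_of_conj_eq_sq (h : t * a * t⁻¹ = a ^ 2) (ha : IsOfFinOrder a) :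
    Odd (orderOf a) := by
  have hsq : orderOf (a ^ 2) = orderOf a := by
    rw [← h, ← MulAut.conj_apply, MulEquiv.orderOf_eq]
  rw [Nat.odd_iff, ← Nat.two_dvd_ne_zero]
  intro heven
  rw [orderOf_pow' a two_ne_zero, Nat.gcd_eq_right heven] at hsq
  have := ha.orderOf_pos
  omega

theorem commute_of_conj_eq_inv_of_odd_orderOf (h : a * b * a⁻¹ = b⁻¹) (ha : Odd (orderOf a)) :
    Commute a b := by
  obtain ⟨m, hm⟩ := ha
  have hsq : Commute (a ^ 2) b := by
    rw [commute_iff_eq, ← mul_inv_eq_iff_eq_mul]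
    calc a ^ 2 * b * (a ^ 2)⁻¹ = a * (a * b * a⁻¹) * a⁻¹ := by simp only [sq]; group
      _ = a * b⁻¹ * a⁻¹ := by rw [h]
      _ = (a * b * a⁻¹)⁻¹ := by group
      _ = b := by rw [h, inv_inv]
  have ha_eq : a = ((a ^ 2) ^ m)⁻¹ := by
    rw [eq_inv_iff_mul_eq_one, ← pow_mul, ← pow_succ', ← hm, pow_orderOf_eq_one]
  rw [ha_eq]
  exact (hsq.pow_left m).inv_left

theorem eq_one_of_satellite_relations (h₁ : t * a * t⁻¹ = a ^ 2) (h₂ : a * b * a⁻¹ = b⁻¹)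
    (h₃ : b ^ 3 = 1) (ha : IsOfFinOrder a) : b = 1 := by
  have hcomm := commute_of_conj_eq_inv_of_odd_orderOf h₂ (odd_orderOf_of_conj_eq_sq h₁ ha)
  have hb : b = b⁻¹ := by rw [← h₂, hcomm.eq, mul_inv_cancel_right]
  have hb2 : b ^ 2 = 1 := by rw [sq, ← mul_inv_cancel b, ← hb]
  rw [← h₃, pow_succ, hb2, one_mul]

end Relations

theorem satelliteRels_lift_eq_one {G : Type*} [Group G] {a b t : G} (h₁ : t * a * t⁻¹ = a ^ 2)
    (h₂ : a * b * a⁻¹ = b⁻¹) (h₃ : b ^ 3 = 1) :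
    ∀ r ∈ satelliteRels, FreeGroup.lift ![a, b, t] r = 1 := by
  rintro r (rfl | rfl | rfl) <;> simp [h₁, h₂, h₃]

namespace SatelliteModel

open SemidirectProduct

/-- The permutational wreath product `ℤ/3 ≀ Sym(ℚ)`, in which `a ↦ x + 1`, `t ↦ 2x` and
`b ↦ (-1) ^ ⌊x⌋` satisfy the relations of `π` with `b ≠ 1`. -/
abbrev Model := (ℚ → Multiplicative (ZMod 3)) ⋊[mulAutArrow] Equiv.Perm ℚ

def shift : Equiv.Perm ℚ := Equiv.addRight 1

def double : Equiv.Perm ℚ := Equiv.mulLeft₀ 2 two_ne_zero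

noncomputable def sign (x : ℚ) : Multiplicative (ZMod 3) := .ofAdd ((-1) ^ ⌊x⌋)

theorem double_mul_shift_mul_inv : double * shift * double⁻¹ = shift ^ 2 := by
  ext x
  simp [double, shift, sq]
  ring

theorem sign_sub_one (x : ℚ) : sign (x - 1) = (sign x)⁻¹ := by
  simp [sign, Int.floor_sub_one, zpow_sub_one₀]

theorem inr_double_conj_shift :
    inr double * inr shift * (inr double)⁻¹ = (inr shift : Model) ^ 2 := by
  rw [← map_inv, ← map_mul, ← map_mul, ← map_pow, double_mul_shift_mul_inv]

theorem inr_shift_conj_inl_sign :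
    inr shift * inl sign * (inr shift)⁻¹ = (inl sign : Model)⁻¹ := by
  rw [← map_inv inr, ← inl_aut, ← map_inv, inl_inj]
  funext x
  show sign (shift⁻¹ x) = _
  simp only [shift, Equiv.Perm.inv_def, Equiv.addRight_symm, Equiv.coe_addRight, Pi.inv_apply,
    ← sub_eq_add_neg, sign_sub_one]

theorem inl_sign_pow_three : (inl sign : Model) ^ 3 = 1 := by
  rw [← map_pow, ← map_one inl, inl_inj]
  funext x
  rw [Pi.pow_apply, sign, ← ofAdd_nsmul, nsmul_eq_mul, ZMod.natCast_self, zero_mul, ofAdd_zero,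
    Pi.one_apply]

theorem inl_sign_ne_one : (inl sign : Model) ≠ 1 := by
  rw [← map_one inl, Ne, inl_inj]
  intro h
  have := congrFun h 0
  simp [sign] at this

end SatelliteModel

namespace PresentedGroup

theorem satelliteRels_relations :
    (of 2 : PresentedGroup satelliteRels) * of 0 * (of 2)⁻¹ = of 0 ^ 2 ∧
    (of 0 : PresentedGroup satelliteRels) * of 1 * (of 0)⁻¹ = (of 1)⁻¹ ∧
    (of 1 : PresentedGroup satelliteRels) ^ 3 = 1 := by
  have h₁ := one_of_mem (rels := satelliteRels) (Set.mem_insert _ _)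
  have h₂ := one_of_mem (rels := satelliteRels) (Set.mem_insert_of_mem _ (Set.mem_insert _ _))
  have h₃ := one_of_mem (rels := satelliteRels)
    (Set.mem_insert_of_mem _ (Set.mem_insert_of_mem _ rfl))
  simp only [map_mul, map_inv, map_pow] at h₁ h₂ h₃
  exact ⟨mul_inv_eq_one.mp h₁, eq_inv_of_mul_eq_one_left h₂, h₃⟩

theorem satelliteRels_map_of_one_eq_one {G : Type*} [Group G]
    (f : PresentedGroup satelliteRels →* G) (ha : IsOfFinOrder (f (of 0))) : f (of 1) = 1 := by
  obtain ⟨h₁, h₂, h₃⟩ := satelliteRels_relations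
  refine eq_one_of_satellite_relations (t := f (of 2)) ?_ ?_ ?_ ha
  · simpa using congrArg f h₁
  · simpa using congrArg f h₂
  · simpa using congrArg f h₃

theorem satelliteRels_of_one_ne_one : (of 1 : PresentedGroup satelliteRels) ≠ 1 := by
  open SatelliteModel in
  let f := toGroup <|
    satelliteRels_lift_eq_one inr_double_conj_shift inr_shift_conj_inl_sign inl_sign_pow_three
  intro h
  apply inl_sign_ne_one
  simpa [f] using congrArg f h

end PresentedGroup

/-- The group `π = ⟨a, b, t | tat⁻¹ = a², aba⁻¹ = b⁻¹, b³ = 1⟩` is not virtually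
torsion-free: every finite-index subgroup contains a non-identity element of finite order. -/
theorem stmt_11 (H : Subgroup (PresentedGroup satelliteRels)) (hH : H.FiniteIndex) :
    ∃ g ∈ H, g ≠ 1 ∧ IsOfFinOrder g := by
  obtain ⟨-, -, hb⟩ := PresentedGroup.satelliteRels_relations
  refine ⟨_, H.normalCore_le ?_, PresentedGroup.satelliteRels_of_one_ne_one,
    isOfFinOrder_iff_pow_eq_one.mpr ⟨3, three_pos, hb⟩⟩
  have : Finite (PresentedGroup satelliteRels ⧸ H.normalCore) :=
    Subgroup.finite_quotient_of_finiteIndex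
  rw [← QuotientGroup.eq_one_iff]
  exact PresentedGroup.satelliteRels_map_of_one_eq_one (QuotientGroup.mk' _)
    (isOfFinOrder_of_finite _)
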